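/- Let ρ, T : (0,∞) → ℝ be twice differentiable with T(λ) > 0 and T'(λ) > 0 for all λ > 0. Suppose at λ* > 0 the function G(λ) = ρ(λ)/T(λ)² has a critical point (G'(λ*) = 0) and additionally ρ(λ*)/T(λ*) = s². Then ρ'(λ*) = 2s² T'(λ*), i.e., λ* is a critical point of the SURE function SURE(λ) = ρ(λ) + m s² - 2s² T(λ). -/

import Mathlib

section DivSq

variable {𝕜 : Type*} [NontriviallyNormedField 𝕜] {f g : 𝕜 → 𝕜} {x : 𝕜}

theorem hasDerivAt_div_sq {f' g' : 𝕜} (hf : HasDerivAt f f' x) (hg : HasDerivAt g g' x)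
    (hx : g x ≠ 0) :
    HasDerivAt (fun y => f y / g y ^ 2) ((f' * g x - 2 * f x * g') / g x ^ 3) x := by
  refine (hf.div (hg.pow 2) (pow_ne_zero 2 hx)).congr_deriv ?_
  simp only [Pi.pow_apply]
  field_simp
  ring

theorem deriv_div_sq_eq_zero_iff (hf : DifferentiableAt 𝕜 f x) (hg : DifferentiableAt 𝕜 g x)
    (hx : g x ≠ 0) :
    deriv (fun y => f y / g y ^ 2) x = 0 ↔ deriv f x * g x = 2 * f x * deriv g x := by
  rw [(hasDerivAt_div_sq hf.hasDerivAt hg.hasDerivAt hx).deriv, div_eq_zero_iff, sub_eq_zero,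
    or_iff_left (pow_ne_zero 3 hx)]

end DivSq

theorem stmt_16_general (ρ T : ℝ → ℝ)
    (hρdiff : ∀ l : ℝ, 0 < l → DifferentiableAt ℝ ρ l ∧ DifferentiableAt ℝ (deriv ρ) l)
    (hTdiff : ∀ l : ℝ, 0 < l → DifferentiableAt ℝ T l ∧ DifferentiableAt ℝ (deriv T) l)
    (hTpos : ∀ l : ℝ, 0 < l → 0 < T l)
    (lstar : ℝ) (hlstar : 0 < lstar)
    (hcrit : deriv (fun l => ρ l / (T l)^2) lstar = 0)
    (s : ℝ) (hkey : ρ lstar / T lstar = s^2) :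
    deriv ρ lstar = 2 * s^2 * deriv T lstar := by
  have hT : T lstar ≠ 0 := (hTpos lstar hlstar).ne'
  have hρ : ρ lstar = s ^ 2 * T lstar := (div_eq_iff hT).mp hkey
  have hstat := (deriv_div_sq_eq_zero_iff (hρdiff lstar hlstar).1 (hTdiff lstar hlstar).1 hT).mp hcrit
  rw [hρ] at hstat
  apply mul_right_cancel₀ hT
  linear_combination hstat

/-- If `G(λ) = ρ(λ)/T(λ)²` has a critical point at `λ* > 0` with `ρ(λ*)/T(λ*) = s²`,
then `ρ'(λ*) = 2s² T'(λ*)`, i.e. `λ*` is a critical point of the SURE function. -/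
theorem stmt_16 (ρ T : ℝ → ℝ)
    (hρdiff : ∀ l : ℝ, 0 < l → DifferentiableAt ℝ ρ l ∧ DifferentiableAt ℝ (deriv ρ) l)
    (hTdiff : ∀ l : ℝ, 0 < l → DifferentiableAt ℝ T l ∧ DifferentiableAt ℝ (deriv T) l)
    (hTpos : ∀ l : ℝ, 0 < l → 0 < T l)
    (hT' : ∀ l : ℝ, 0 < l → 0 < deriv T l)
    (lstar : ℝ) (hlstar : 0 < lstar)
    (hcrit : deriv (fun l => ρ l / (T l)^2) lstar = 0)
    (s : ℝ) (hs : 0 < s) (hkey : ρ lstar / T lstar = s^2) :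
    deriv ρ lstar = 2 * s^2 * deriv T lstar :=
  stmt_16_general ρ T hρdiff hTdiff hTpos lstar hlstar hcrit s hkey
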